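/- Let P ∈ F_q[x] be irreducible with gcd(b,P)=1, and let e ≥ 1. For any integer j with e+1 ≤ j ≤ ep, we have α(P^j) = α(P^e) or α(P^j) = p·α(P^e); likewise π(P^j) = π(P^e) or p·π(P^e). -/
import Mathlib


open Polynomial

noncomputable def genFib {K : Type*} [Field K] (a b : K[X]) : ℕ → K[X]
  | 0 => 0
  | 1 => 1
  | n + 2 => a * genFib a b (n + 1) + b * genFib a b n

noncomputable def fibRank {K : Type*} [Field K] (a b M : K[X]) : ℕ :=
  sInf {n : ℕ | 0 < n ∧ M ∣ genFib a b n}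

noncomputable def fibPeriod {K : Type*} [Field K] (a b M : K[X]) : ℕ :=
  sInf {n : ℕ | 0 < n ∧ M ∣ genFib a b n ∧ M ∣ (genFib a b (n + 1) - 1)}

noncomputable def polyOrd {K : Type*} [Field K] (M g : K[X]) : ℕ :=
  orderOf (Ideal.Quotient.mk (Ideal.span {M}) g)

section Aux

variable {K : Type*} [Field K] (a b : K[X])

local notation "F" => genFib a b

lemma genFib_zero : F 0 = 0 := rfl
lemma genFib_one : F 1 = 1 := rfl
lemma genFib_add_two (n : ℕ) : F (n + 2) = a * F (n + 1) + b * F n := rfl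

lemma genFib_two : F 2 = a := by
  rw [show (2 : ℕ) = 0 + 2 from rfl, genFib_add_two, genFib_zero, genFib_one]; ring

lemma genFib_add (m n : ℕ) :
    F (m + n + 1) = F (m + 1) * F (n + 1) + b * F m * F n := by
  induction m using Nat.twoStepInduction with
  | zero => simp [genFib_zero, genFib_one]
  | one =>
      rw [show (1 : ℕ) + n + 1 = n + 2 by omega, genFib_add_two, genFib_two, genFib_one]
      ring
  | more m ih1 ih2 =>
      have e1 : m + 2 + n + 1 = m + n + 1 + 2 := by omega
      rw [e1, genFib_add_two, show m + n + 1 + 1 = m + 1 + n + 1 by omega, ih2, ih1,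
        show m + 2 + 1 = m + 1 + 2 by omega, genFib_add_two a b (m + 1),
        show m + 1 + 1 = m + 2 by omega, genFib_add_two a b m]
      ring

variable {a b}

lemma genFib_consecutive_not_dvd {P : K[X]} (hP : Irreducible P) (hPb : ¬ P ∣ b) :
    ∀ n : ℕ, P ∣ F n → P ∣ F (n + 1) → False := by
  intro n
  induction n with
  | zero =>
      intro _ h1
      exact hP.not_isUnit (isUnit_of_dvd_one (by simpa [genFib_one] using h1))
  | succ n ih =>
      intro h1 h2
      rw [genFib_add_two] at h2
      have hbF : P ∣ b * F n := by
        have := dvd_sub h2 (h1.mul_left a)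
        simpa using this
      rcases hP.prime.dvd_mul.mp hbF with h | h
      · exact hPb h
      · exact ih h h1

lemma genFib_dvd_add {M : K[X]} {m n : ℕ} (hm : M ∣ F m) (hn : M ∣ F n) :
    M ∣ F (m + n) := by
  rcases m with _ | k
  · simpa using hn
  · rw [show k + 1 + n = k + n + 1 by omega, genFib_add a b k n]
    exact dvd_add (dvd_mul_of_dvd_left hm _) (hn.mul_left _)

lemma genFib_dvd_mul {M : K[X]} {n : ℕ} (hn : M ∣ F n) (k : ℕ) :
    M ∣ F (k * n) := by
  induction k with
  | zero => simp [genFib_zero]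
  | succ k ih =>
      rw [show (k + 1) * n = k * n + n by ring]
      exact genFib_dvd_add ih hn

lemma fibRank_pos_and_dvd {M : K[X]}
    (hne : ∃ t, 0 < t ∧ M ∣ F t) :
    0 < fibRank a b M ∧ M ∣ F (fibRank a b M) :=
  Nat.sInf_mem (s := {n : ℕ | 0 < n ∧ M ∣ F n}) hne

lemma fibRank_dvd {P : K[X]} (hP : Irreducible P) (hPb : ¬ P ∣ b) {j : ℕ} (hj : 1 ≤ j)
    (hne : ∃ t, 0 < t ∧ P ^ j ∣ F t) {n : ℕ} (hn : P ^ j ∣ F n) :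
    fibRank a b (P ^ j) ∣ n := by
  obtain ⟨hα0, hαd⟩ := fibRank_pos_and_dvd (M := P ^ j) hne
  set α := fibRank a b (P ^ j) with hαdef
  set q := n / α with hqdef
  set r := n % α with hrdef
  have hn_eq : n = α * q + r := by rw [hqdef, hrdef]; exact (Nat.div_add_mod n α).symm
  by_cases hr0 : r = 0
  · exact ⟨q, by rw [hn_eq, hr0, add_zero]⟩
  have hrpos : 0 < r := Nat.pos_of_ne_zero hr0
  have hrlt : r < α := Nat.mod_lt n hα0
  exfalso
  have hq1 : 1 ≤ q := by
    by_contra h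
    have hq0 : q = 0 := Nat.eq_zero_of_not_pos h
    have hnr : n = r := by rw [hn_eq, hq0, mul_zero, zero_add]
    have hmem : α ≤ n := Nat.sInf_le ⟨by omega, hn⟩
    omega
  obtain ⟨s, hs⟩ : ∃ s, r = s + 1 := ⟨r - 1, by omega⟩
  have hFn : F n = F (α * q + 1) * F (s + 1) + b * F (α * q) * F s := by
    rw [show n = α * q + s + 1 by omega, genFib_add a b (α * q) s]
  have hdvd_q : P ^ j ∣ F (α * q) := by
    rw [mul_comm]; exact genFib_dvd_mul hαd q
  have hmul : P ^ j ∣ F (α * q + 1) * F (s + 1) := by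
    have h1 : P ^ j ∣ F (α * q + 1) * F (s + 1) + b * F (α * q) * F s := hFn ▸ hn
    simpa using dvd_sub h1 ((hdvd_q.mul_left b).mul_right (F s))
  have hPnotdvd : ¬ P ∣ F (α * q + 1) := by
    intro h
    exact genFib_consecutive_not_dvd hP hPb (α * q)
      (dvd_trans (dvd_pow_self P (by omega)) hdvd_q) h
  have hFr : P ^ j ∣ F (s + 1) := hP.prime.pow_dvd_of_dvd_mul_left j hPnotdvd hmul
  have : α ≤ s + 1 := Nat.sInf_le ⟨by omega, hFr⟩
  omega

/-- Shift property of a "period point". -/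
lemma genFib_shift {M : K[X]} {n : ℕ} (h0 : M ∣ F n) (h1 : M ∣ F (n + 1) - 1) :
    ∀ k, M ∣ F (n + k) - F k := by
  intro k
  induction k using Nat.twoStepInduction with
  | zero => simpa [genFib_zero] using h0
  | one => simpa [genFib_one] using h1
  | more k ih1 ih2 =>
      have hgoal : F (n + (k + 2)) - F (k + 2)
          = a * (F (n + (k + 1)) - F (k + 1)) + b * (F (n + k) - F k) := by
        rw [show n + (k + 2) = (n + k) + 2 by omega, genFib_add_two, genFib_add_two,
          show (n + k) + 1 = n + (k + 1) by omega]
        ring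
      rw [hgoal]
      exact dvd_add (ih2.mul_left a) (ih1.mul_left b)

lemma genFib_shift_mul {M : K[X]} {n : ℕ} (h0 : M ∣ F n) (h1 : M ∣ F (n + 1) - 1) :
    ∀ q k, M ∣ F (n * q + k) - F k := by
  intro q
  induction q with
  | zero => simp
  | succ q ih =>
      intro k
      have e : n * (q + 1) + k = n + (n * q + k) := by ring
      have h2 := genFib_shift h0 h1 (n * q + k)
      have h3 := ih k
      have : F (n * (q + 1) + k) - F k
          = (F (n + (n * q + k)) - F (n * q + k)) + (F (n * q + k) - F k) := by
        rw [e]; ring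
      rw [this]
      exact dvd_add h2 h3

lemma fibPeriod_mem {M : K[X]}
    (hne : ∃ t, 0 < t ∧ M ∣ F t ∧ M ∣ F (t + 1) - 1) :
    0 < fibPeriod a b M ∧ M ∣ F (fibPeriod a b M) ∧ M ∣ F (fibPeriod a b M + 1) - 1 :=
  Nat.sInf_mem (s := {n : ℕ | 0 < n ∧ M ∣ F n ∧ M ∣ F (n + 1) - 1}) hne

lemma fibPeriod_dvd {M : K[X]}
    (hne : ∃ t, 0 < t ∧ M ∣ F t ∧ M ∣ F (t + 1) - 1)
    {n : ℕ} (h0 : M ∣ F n) (h1 : M ∣ F (n + 1) - 1) :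
    fibPeriod a b M ∣ n := by
  obtain ⟨hπ0, hπd, hπd1⟩ := fibPeriod_mem (M := M) hne
  set π := fibPeriod a b M with hπdef
  set q := n / π with hqdef
  set r := n % π with hrdef
  have hn_eq : n = π * q + r := by rw [hqdef, hrdef]; exact (Nat.div_add_mod n π).symm
  have hFr : M ∣ F r := by
    have h2 := genFib_shift_mul hπd hπd1 q r
    have : F r = F n - (F (π * q + r) - F r) := by rw [← hn_eq]; ring
    rw [this]
    exact dvd_sub h0 (hn_eq ▸ h2)
  have hFr1 : M ∣ F (r + 1) - 1 := by
    have h2 := genFib_shift_mul hπd hπd1 q (r + 1)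
    have : F (r + 1) - 1 = (F (n + 1) - 1) - (F (π * q + (r + 1)) - F (r + 1)) := by
      rw [show π * q + (r + 1) = n + 1 by omega]; ring
    rw [this]
    exact dvd_sub h1 h2
  by_cases hr0 : r = 0
  · exact ⟨q, by rw [hn_eq, hr0, add_zero]⟩
  · exfalso
    have hrlt : r < π := Nat.mod_lt n hπ0
    have : π ≤ r := Nat.sInf_le ⟨Nat.pos_of_ne_zero hr0, hFr, hFr1⟩
    omega

end Aux

section Finiteness

variable {K : Type*} [Field K] [Fintype K] (a b : K[X])

local notation "F" => genFib a b

lemma quotient_finite {M : K[X]} (hM : M ≠ 0) :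
    Finite (K[X] ⧸ Ideal.span ({M} : Set K[X])) := by
  set N : K[X] := M * C M.leadingCoeff⁻¹ with hN
  have hmonic : N.Monic := monic_mul_leadingCoeff_inv hM
  have hspan : Ideal.span ({M} : Set K[X]) = Ideal.span ({N} : Set K[X]) := by
    apply (Ideal.span_singleton_eq_span_singleton).mpr
    exact associated_mul_unit_right M _ (isUnit_C.mpr (isUnit_iff_ne_zero.mpr
      (inv_ne_zero (leadingCoeff_ne_zero.mpr hM))))
  have : Finite (AdjoinRoot N) := by
    have : Module.Finite K (AdjoinRoot N) :=
      Module.Finite.of_basis (AdjoinRoot.powerBasis' hmonic).basis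
    exact Module.finite_of_finite K
  rw [hspan]
  exact this

/-- Existence of a "period point" for any nonzero modulus coprime to `b`. -/
lemma exists_period {M : K[X]} (hM : M ≠ 0) (hbM : IsCoprime b M) :
    ∃ t, 0 < t ∧ M ∣ F t ∧ M ∣ F (t + 1) - 1 := by
  classical
  set I : Ideal K[X] := Ideal.span {M} with hI
  have hfin : Finite (K[X] ⧸ I) := quotient_finite hM
  set φ : K[X] →+* K[X] ⧸ I := Ideal.Quotient.mk I with hφ
  -- b is invertible mod M
  obtain ⟨u, v, huv⟩ := hbM
  have hbu : φ u * φ b = 1 := by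
    have : φ (u * b + v * M) = φ 1 := by rw [huv]
    have hM0 : φ M = 0 := Ideal.Quotient.eq_zero_iff_dvd M M |>.mpr dvd_rfl
    simpa [map_add, map_mul, hM0] using this
  set s : ℕ → (K[X] ⧸ I) × (K[X] ⧸ I) := fun n => (φ (F n), φ (F (n + 1))) with hs
  obtain ⟨m, n, hmn, hsmn⟩ := Finite.exists_ne_map_eq_of_infinite s
  -- wlog m < n
  wlog hlt : m < n generalizing m n
  · exact this n m hmn.symm hsmn.symm (by omega)
  -- step back
  have hback : ∀ m' n' : ℕ, φ (F (m' + 1)) = φ (F (n' + 1)) →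
      φ (F (m' + 2)) = φ (F (n' + 2)) → φ (F m') = φ (F n') := by
    intro m' n' h1 h2
    have e1 : φ (F (m' + 2)) = φ a * φ (F (m' + 1)) + φ b * φ (F m') := by
      rw [genFib_add_two]; simp [map_add, map_mul]
    have e2 : φ (F (n' + 2)) = φ a * φ (F (n' + 1)) + φ b * φ (F n') := by
      rw [genFib_add_two]; simp [map_add, map_mul]
    have hb' : φ b * φ (F m') = φ b * φ (F n') := by
      have := h2
      rw [e1, e2, h1] at this
      exact by linear_combination this
    calc φ (F m') = (φ u * φ b) * φ (F m') := by rw [hbu]; ring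
      _ = φ u * (φ b * φ (F m')) := by ring
      _ = φ u * (φ b * φ (F n')) := by rw [hb']
      _ = (φ u * φ b) * φ (F n') := by ring
      _ = φ (F n') := by rw [hbu]; ring
  set d := n - m with hd
  have hd0 : 0 < d := by omega
  have hkey : ∀ m', s m' = s (m' + d) → s 0 = s d := by
    intro m'
    induction m' with
    | zero => intro h; simpa using h
    | succ k ih =>
        intro h
        apply ih
        have h1 : φ (F (k + 1)) = φ (F (k + d + 1)) := by
          have := congrArg Prod.fst h
          simpa [hs, show k + 1 + d = k + d + 1 by omega] using this
        have h2 : φ (F (k + 2)) = φ (F (k + d + 2)) := by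
          have := congrArg Prod.snd h
          simpa [hs, show k + 1 + d + 1 = k + d + 2 by omega] using this
        have h0 : φ (F k) = φ (F (k + d)) := hback k (k + d) h1 h2
        simp only [hs, Prod.mk.injEq]
        exact ⟨h0, h1⟩
  have hsd : s 0 = s d := hkey m (by rw [show m + d = n by omega]; exact hsmn)
  have hc1 : φ (F d) = 0 := by
    have := congrArg Prod.fst hsd
    simpa [hs, genFib_zero] using this.symm
  have hc2 : φ (F (d + 1)) = 1 := by
    have := congrArg Prod.snd hsd
    simpa [hs, genFib_one] using this.symm
  refine ⟨d, hd0, ?_, ?_⟩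
  · exact (Ideal.Quotient.eq_zero_iff_dvd M _).mp hc1
  · refine (Ideal.Quotient.eq_zero_iff_dvd M _).mp ?_
    rw [map_sub, hc2, map_one, sub_self]

end Finiteness

section Frobenius

variable {K : Type*} [Field K] (p : ℕ) [hp : Fact p.Prime] [CharP K p] (a b : K[X])

local notation "F" => genFib a b

/-- Frobenius identities for the generalized Fibonacci sequence in characteristic `p`. -/
lemma genFib_frobenius (n : ℕ) :
    F (p * (n + 1)) = F p * F (n + 1) ^ p ∧
      b * F (p * (n + 1) - 1) = F (n + 1) ^ p * (b * F (p - 1)) + (b * F n) ^ p := by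
  classical
  set f : (K[X])[X] := X ^ 2 - (C a * X + C b) with hf
  have hdeglt : (C a * X + C b : (K[X])[X]).degree < (2 : ℕ) :=
    lt_of_le_of_lt degree_linear_le (by norm_num)
  have hmf : f.Monic := monic_X_pow_sub hdeglt
  have hdeg : f.degree = 2 := by
    rw [hf, degree_sub_eq_left_of_degree_lt (by simpa [degree_X_pow] using hdeglt),
      degree_X_pow]
    norm_cast
  haveI : Nontrivial (AdjoinRoot f) := AdjoinRoot.nontrivial f (by rw [hdeg]; norm_num)
  haveI : CharP (AdjoinRoot f) p :=
    charP_of_injective_algebraMap (algebraMap K (AdjoinRoot f)).injective p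
  set r : AdjoinRoot f := AdjoinRoot.root f with hr
  set of : K[X] →+* AdjoinRoot f := AdjoinRoot.of f with hof
  have hroot : r ^ 2 = of a * r + of b := by
    have h0 := AdjoinRoot.eval₂_root f
    rw [hf] at h0
    simp only [eval₂_sub, eval₂_pow, eval₂_X, eval₂_add, eval₂_mul, eval₂_C] at h0
    have := sub_eq_zero.mp h0
    simpa [hr, hof] using this
  have hpow : ∀ n : ℕ, r ^ (n + 1) = of (F (n + 1)) * r + of (b * F n) := by
    intro n
    induction n using Nat.twoStepInduction with
    | zero => simp [genFib_one, genFib_zero]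
    | one =>
        rw [genFib_two, genFib_one, mul_one, hroot]
    | more k ih1 ih2 =>
        have : r ^ (k + 3) = r ^ (k + 2) * r := by ring
        rw [this, ih2, add_mul, mul_assoc, ← pow_two, hroot]
        rw [genFib_add_two a b (k + 1), genFib_add_two a b k]
        simp only [map_add, map_mul]
        ring
  -- uniqueness of linear representations
  have huniq : ∀ u v u' v' : K[X],
      of u * r + of v = of u' * r + of v' → u = u' ∧ v = v' := by
    intro u v u' v' h
    have hmk : AdjoinRoot.mk f (C u * X + C v) = AdjoinRoot.mk f (C u' * X + C v') := by
      simpa [map_add, map_mul, AdjoinRoot.mk_C, AdjoinRoot.mk_X, hr, hof] using h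
    have hdvd : f ∣ (C u * X + C v) - (C u' * X + C v') := AdjoinRoot.mk_eq_mk.mp hmk
    have hrw : (C u * X + C v) - (C u' * X + C v') = C (u - u') * X + C (v - v') := by
      simp only [map_sub]; ring
    rw [hrw] at hdvd
    have hzero : C (u - u') * X + C (v - v') = 0 := by
      by_contra hne
      have := Polynomial.degree_le_of_dvd hdvd hne
      rw [hdeg] at this
      have hle : (C (u - u') * X + C (v - v') : (K[X])[X]).degree ≤ 1 := degree_linear_le
      have : (2 : WithBot ℕ) ≤ 1 := le_trans this hle
      norm_num at this
    constructor
    · have := congrArg (fun q => Polynomial.coeff q 1) hzero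
      simpa [coeff_add, coeff_C, sub_eq_zero] using this
    · have := congrArg (fun q => Polynomial.coeff q 0) hzero
      simpa [coeff_add, coeff_C, sub_eq_zero] using this
  -- now compute r ^ (p * (n+1)) two ways
  have hp1 : p - 1 + 1 = p := Nat.succ_pred_eq_of_pos hp.out.pos
  have hrp : r ^ p = of (F p) * r + of (b * F (p - 1)) := by
    rw [← hp1, hpow (p - 1), hp1]
  have hm : p * (n + 1) - 1 + 1 = p * (n + 1) := by
    have := Nat.mul_pos hp.out.pos (show 0 < n + 1 by omega)
    omega
  have lhs : r ^ (p * (n + 1)) = of (F (p * (n + 1))) * r + of (b * F (p * (n + 1) - 1)) := by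
    rw [← hm, hpow, hm]
  have rhs : r ^ (p * (n + 1))
      = of (F (n + 1) ^ p * F p) * r
        + of (F (n + 1) ^ p * (b * F (p - 1)) + (b * F n) ^ p) := by
    have e1 : r ^ (p * (n + 1)) = (r ^ (n + 1)) ^ p := by
      rw [mul_comm, pow_mul]
    rw [e1, hpow n, add_pow_char, mul_pow, ← map_pow, ← map_pow, hrp]
    simp only [map_add, map_mul, map_pow]
    ring
  have := huniq _ _ _ _ (lhs.symm.trans rhs)
  constructor
  · rw [this.1]; ring
  · rw [this.2]

lemma genFib_frobenius_succ (n : ℕ) :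
    F (p * (n + 1) + 1) = F (p + 1) * F (n + 1) ^ p + (b * F n) ^ p := by
  obtain ⟨h1, h2⟩ := genFib_frobenius p a b n
  obtain ⟨m, hm⟩ : ∃ m, p * (n + 1) = m + 1 :=
    ⟨p * (n + 1) - 1, by have := Nat.mul_pos hp.out.pos (show 0 < n + 1 by omega); omega⟩
  obtain ⟨t, ht⟩ : ∃ t, p = t + 1 := ⟨p - 1, by have := hp.out.pos; omega⟩
  have hm' : p * (n + 1) - 1 = m := by omega
  have ht' : p - 1 = t := by omega
  rw [hm', ht'] at h2
  rw [show p * (n + 1) + 1 = m + 2 by omega, genFib_add_two,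
    show m + 1 = p * (n + 1) by omega, h1,
    show p + 1 = t + 2 by omega, genFib_add_two, h2,
    show t + 1 = p by omega]
  ring

end Frobenius

theorem stmt14 {K : Type*} [Field K] [Fintype K] (p : ℕ) [CharP K p]
    (a b : K[X]) (hb : b ≠ 0)
    (P : K[X]) (hP : Irreducible P) (hco : IsCoprime b P)
    (e : ℕ) (he : 1 ≤ e) (j : ℕ) (hj₁ : e + 1 ≤ j) (hj₂ : j ≤ e * p) :
    (fibRank a b (P ^ j) = fibRank a b (P ^ e) ∨
      fibRank a b (P ^ j) = p * fibRank a b (P ^ e)) ∧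
    (fibPeriod a b (P ^ j) = fibPeriod a b (P ^ e) ∨
      fibPeriod a b (P ^ j) = p * fibPeriod a b (P ^ e)) := by
  haveI hp : Fact p.Prime := ⟨CharP.char_is_prime K p⟩
  have hPb : ¬ P ∣ b := fun h => hP.not_isUnit (hco.isUnit_of_dvd' h dvd_rfl)
  have hPe0 : (P : K[X]) ^ e ≠ 0 := pow_ne_zero _ hP.ne_zero
  have hPj0 : (P : K[X]) ^ j ≠ 0 := pow_ne_zero _ hP.ne_zero
  have hcoe : IsCoprime b (P ^ e) := hco.pow_right
  have hcoj : IsCoprime b (P ^ j) := hco.pow_right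
  have hej : e ≤ j := by omega
  have hdvd_pow : (P : K[X]) ^ e ∣ P ^ j := pow_dvd_pow P hej
  -- nonemptiness
  have hTe := exists_period a b hPe0 hcoe
  have hTj := exists_period a b hPj0 hcoj
  have hSe : ∃ t, 0 < t ∧ P ^ e ∣ genFib a b t := by
    obtain ⟨t, ht0, ht1, _⟩ := hTe; exact ⟨t, ht0, ht1⟩
  have hSj : ∃ t, 0 < t ∧ P ^ j ∣ genFib a b t := by
    obtain ⟨t, ht0, ht1, _⟩ := hTj; exact ⟨t, ht0, ht1⟩
  have hje : 1 ≤ e := he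
  -- helper for ep-divisibility via Frobenius
  have pow_div : ∀ g : K[X], P ^ e ∣ g → P ^ j ∣ g ^ p := by
    intro g hg
    calc P ^ j ∣ P ^ (e * p) := pow_dvd_pow P hj₂
      _ = (P ^ e) ^ p := by rw [pow_mul]
      _ ∣ g ^ p := pow_dvd_pow_of_dvd hg p
  constructor
  · -- rank part
    obtain ⟨hαe0, hαed⟩ := fibRank_pos_and_dvd (a := a) (b := b) (M := P ^ e) hSe
    obtain ⟨hαj0, hαjd⟩ := fibRank_pos_and_dvd (a := a) (b := b) (M := P ^ j) hSj
    set αe := fibRank a b (P ^ e)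
    set αj := fibRank a b (P ^ j)
    have h1 : αe ∣ αj :=
      fibRank_dvd hP hPb hje hSe (dvd_trans hdvd_pow hαjd)
    -- P^j ∣ F (p * αe)
    obtain ⟨m, hm⟩ : ∃ m, αe = m + 1 := ⟨αe - 1, by omega⟩
    have hfrob := (genFib_frobenius p a b m).1
    have h2 : P ^ j ∣ genFib a b (p * αe) := by
      rw [hm, hfrob]
      exact dvd_mul_of_dvd_right (pow_div _ (hm ▸ hαed)) _
    have h3 : αj ∣ p * αe := fibRank_dvd hP hPb (by omega) hSj h2
    obtain ⟨k, hk⟩ := h1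
    have hkp : k ∣ p := by
      have : αe * k ∣ αe * p := by rw [← hk, mul_comm αe p]; exact h3
      exact (mul_dvd_mul_iff_left (by omega : αe ≠ 0)).mp this
    rcases hp.out.eq_one_or_self_of_dvd k hkp with h | h
    · left; rw [hk, h, mul_one]
    · right; rw [hk, h, mul_comm]
  · -- period part
    obtain ⟨hπe0, hπed, hπed1⟩ := fibPeriod_mem (a := a) (b := b) (M := P ^ e) hTe
    obtain ⟨hπj0, hπjd, hπjd1⟩ := fibPeriod_mem (a := a) (b := b) (M := P ^ j) hTj
    set πe := fibPeriod a b (P ^ e)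
    set πj := fibPeriod a b (P ^ j)
    have h1 : πe ∣ πj :=
      fibPeriod_dvd hTe (dvd_trans hdvd_pow hπjd) (dvd_trans hdvd_pow hπjd1)
    obtain ⟨m, hm⟩ : ∃ m, πe = m + 1 := ⟨πe - 1, by omega⟩
    have hfrob1 := (genFib_frobenius p a b m).1
    have hfrob2 := genFib_frobenius_succ p a b m
    have h20 : P ^ j ∣ genFib a b (p * πe) := by
      rw [hm, hfrob1]
      exact dvd_mul_of_dvd_right (pow_div _ (hm ▸ hπed)) _
    have h21 : P ^ j ∣ genFib a b (p * πe + 1) - 1 := by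
      rw [hm, hfrob2, ← hm]
      have hbFm : b * genFib a b m = genFib a b (πe + 1) - a * genFib a b πe := by
        rw [hm, genFib_add_two]; ring
      have h4 : (b * genFib a b m) ^ p
          = genFib a b (πe + 1) ^ p - (a * genFib a b πe) ^ p := by
        rw [hbFm, sub_pow_char]
      have h5 : genFib a b (πe + 1) ^ p = (genFib a b (πe + 1) - 1) ^ p + 1 := by
        conv_lhs => rw [show genFib a b (πe + 1) = (genFib a b (πe + 1) - 1) + 1 by ring]
        rw [add_pow_char, one_pow]
      have key : genFib a b (p + 1) * genFib a b πe ^ p + (b * genFib a b m) ^ p - 1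
          = (genFib a b (p + 1) - a ^ p) * genFib a b πe ^ p
            + (genFib a b (πe + 1) - 1) ^ p := by
        rw [h4, h5, mul_pow]
        ring
      rw [key]
      exact dvd_add (dvd_mul_of_dvd_right (pow_div _ hπed) _) (pow_div _ hπed1)
    have h3 : πj ∣ p * πe := fibPeriod_dvd hTj h20 h21
    obtain ⟨k, hk⟩ := h1
    have hkp : k ∣ p := by
      have : πe * k ∣ πe * p := by rw [← hk, mul_comm πe p]; exact h3
      exact (mul_dvd_mul_iff_left (by omega : πe ≠ 0)).mp this
    rcases hp.out.eq_one_or_self_of_dvd k hkp with h | h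
    · left; rw [hk, h, mul_one]
    · right; rw [hk, h, mul_comm]
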